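/- Let $(J,\le)$ be a join-semilattice with a function $d:J\to\mathbb{R}$ such that $x\le y$ implies $d(x)\ge d(y)$, and for all $x,y$, $d(x\vee y)\le \min(d(x),d(y))$. Define $\delta(x,y)=d(x)+d(y)-2d(x\vee y)$. Then $\delta$ is symmetric, nonnegative, and satisfies $\delta(x,x)=0$; moreover if additionally for every $x\in J$ the set $\{x\vee z : z\in J\}$ is totally ordered and $x\le y$ implies $\delta(x,y)=d(x)-d(y)$ is compatible, then $\delta$ satisfies the triangle inequality $\delta(x,y)\le \delta(x,z)+\delta(z,y)$ for all $x,y,z\in J$. -/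

import Mathlib

/-!
`supDist d` is the tree metric of the bifurcation tree: `d` is the height and `x ⊔ y` the point
where the branches through `x` and `y` merge. The triangle inequality through `z` reduces to the
four-point inequality `d (z ⊔ x) + d (z ⊔ y) ≤ d z + d (x ⊔ y)`. As `z ⊔ x` and `z ⊔ y` lie in the
chain above `z`, one of them, say `z ⊔ y`, lies above both `x` and `y`, hence above `x ⊔ y`, and
antitonicity of `d` concludes.
-/

section SupDist

variable {J : Type*} [SemilatticeSup J]

def supDist (d : J → ℝ) (x y : J) : ℝ := d x + d y - 2 * d (x ⊔ y)

theorem supDist_comm (d : J → ℝ) (x y : J) : supDist d x y = supDist d y x := by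
  simp only [supDist, sup_comm x y]
  ring

theorem supDist_self (d : J → ℝ) (x : J) : supDist d x x = 0 := by
  simp only [supDist, sup_idem]
  ring

theorem supDist_nonneg {d : J → ℝ} (hd : Antitone d) (x y : J) : 0 ≤ supDist d x y := by
  have hx : d (x ⊔ y) ≤ d x := hd le_sup_left
  have hy : d (x ⊔ y) ≤ d y := hd le_sup_right
  unfold supDist
  linarith

theorem Antitone.add_apply_sup_le {d : J → ℝ} (hd : Antitone d) {x y z : J}
    (hxy : z ⊔ x ≤ z ⊔ y) : d (z ⊔ x) + d (z ⊔ y) ≤ d z + d (x ⊔ y) := by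
  have hz : d (z ⊔ x) ≤ d z := hd le_sup_left
  have hsup : d (z ⊔ y) ≤ d (x ⊔ y) := hd (sup_le (le_sup_right.trans hxy) le_sup_right)
  linarith

theorem supDist_triangle {d : J → ℝ} (hd : Antitone d) {z : J}
    (hz : IsChain (· ≤ ·) {w : J | ∃ u, w = z ⊔ u}) (x y : J) :
    supDist d x y ≤ supDist d x z + supDist d z y := by
  have key : d (z ⊔ x) + d (z ⊔ y) ≤ d z + d (x ⊔ y) := by
    rcases hz.total ⟨x, rfl⟩ ⟨y, rfl⟩ with hxy | hyx
    · exact hd.add_apply_sup_le hxy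
    · rw [add_comm (d (z ⊔ x)), sup_comm x y]
      exact hd.add_apply_sup_le hyx
  simp only [supDist, sup_comm x z]
  linarith

end SupDist

theorem stmt0_general {J : Type*} [SemilatticeSup J] (d : J → ℝ) (δ : J → J → ℝ)
    (hδ : ∀ x y, δ x y = d x + d y - 2 * d (x ⊔ y))
    (h1 : ∀ x y : J, x ≤ y → d y ≤ d x) :
    (∀ x y, δ x y = δ y x) ∧ (∀ x y, 0 ≤ δ x y) ∧ (∀ x, δ x x = 0) ∧
    ((∀ x : J, IsChain (· ≤ ·) {w : J | ∃ z : J, w = x ⊔ z}) →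
      (∀ x y : J, x ≤ y → δ x y = d x - d y) →
      ∀ x y z : J, δ x y ≤ δ x z + δ z y) := by
  obtain rfl : δ = supDist d := funext fun x => funext (hδ x)
  have hd : Antitone d := fun x y hxy => h1 x y hxy
  exact ⟨supDist_comm d, supDist_nonneg hd, supDist_self d,
    fun hchain _ x y z => supDist_triangle hd (hchain z) x y⟩

/-- the bifurcation-tree distance on a join-semilattice.
`d` is antitone and `d (x ⊔ y) ≤ min (d x) (d y)`; `δ x y = d x + d y - 2 d (x ⊔ y)`
is symmetric, nonnegative, vanishes on the diagonal, and (under the tree-like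
conditions: upper sets `{x ⊔ z : z}` totally ordered and `x ≤ y → δ x y = d x - d y`)
satisfies the triangle inequality. -/
theorem stmt0 {J : Type*} [SemilatticeSup J] (d : J → ℝ) (δ : J → J → ℝ)
    (hδ : ∀ x y, δ x y = d x + d y - 2 * d (x ⊔ y))
    (h1 : ∀ x y : J, x ≤ y → d y ≤ d x)
    (h2 : ∀ x y : J, d (x ⊔ y) ≤ min (d x) (d y)) :
    (∀ x y, δ x y = δ y x) ∧ (∀ x y, 0 ≤ δ x y) ∧ (∀ x, δ x x = 0) ∧
    ((∀ x : J, IsChain (· ≤ ·) {w : J | ∃ z : J, w = x ⊔ z}) →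
      (∀ x y : J, x ≤ y → δ x y = d x - d y) →
      ∀ x y z : J, δ x y ≤ δ x z + δ z y) :=
  stmt0_general d δ hδ h1
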